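/- The multiplication on the strands algebra A(n,k) is associative: for partial permutations a = (S,T,φ), b = (T,V,ψ), c = (V,W,χ), we have (a·b)·c = a·(b·c), where the product (S,T,φ)·(U,V,ψ) is (S,V,ψ∘φ) if T = U and inv(φ)+inv(ψ) = inv(ψ∘φ), and 0 otherwise. -/

import Mathlib

/-!
Inversion numbers are subadditive under composition: an inversion of `ψ ∘ φ` is either an
inversion of `φ` or the `φ`-preimage of an inversion of `ψ`. Hence, when the sets match, both
bracketings of `a·b·c` are nonzero exactly when `inv (χ ∘ ψ ∘ φ) = inv φ + inv ψ + inv χ`, and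
then both are `(S, W, χ ∘ ψ ∘ φ)`.
-/

/-- A generator `(S, T, φ)` of the strands algebra `A(n,k)`: `S`, `T` are
`k`-element subsets of `{1,…,n}` and `φ : S → T` is a non-decreasing bijection
(upward-veering strands: `x ≤ φ x`). -/
structure StrandsGen (n k : ℕ) where
  S : Finset (Fin n)
  T : Finset (Fin n)
  hS : S.card = k
  hT : T.card = k
  str : {x // x ∈ S} ≃ {x // x ∈ T}
  nondec : ∀ x : {x // x ∈ S}, (x : Fin n) ≤ (str x : Fin n)

/-- The number of inversions of `φ`. -/
def strandInv {n : ℕ} {S T : Finset (Fin n)} (φ : {x // x ∈ S} ≃ {x // x ∈ T}) : ℕ :=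
  (Finset.univ.filter fun p : {x // x ∈ S} × {x // x ∈ S} =>
    (p.1 : Fin n) < (p.2 : Fin n) ∧ (φ p.2 : Fin n) < (φ p.1 : Fin n)).card

def castMem {n : ℕ} {T U : Finset (Fin n)} (h : T = U) : {x // x ∈ T} ≃ {x // x ∈ U} :=
  Equiv.subtypeEquivProp (by rw [h])

/-- Composite generator `(S, V, ψ ∘ φ)`. -/
def StrandsGen.comp {n k : ℕ} (a b : StrandsGen n k) (h : a.T = b.S) : StrandsGen n k where
  S := a.S
  T := b.T
  hS := a.hS
  hT := b.hT
  str := (a.str.trans (castMem h)).trans b.str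
  nondec := fun x => le_trans (a.nondec x) (b.nondec (castMem h (a.str x)))

/-- The strands algebra multiplication on generators: `(S,T,φ)·(U,V,ψ)` is
`(S,V,ψ∘φ)` if `T = U` and `inv φ + inv ψ = inv (ψ ∘ φ)`, and `0` (here `none`)
otherwise. -/
def StrandsGen.mul {n k : ℕ} (a b : StrandsGen n k) : Option (StrandsGen n k) :=
  if h : a.T = b.S then
    if strandInv (a.comp b h).str = strandInv a.str + strandInv b.str then
      some (a.comp b h)
    else none
  else none

/-- Multiplication extended to `0` on the left. -/
def StrandsGen.mulL {n k : ℕ} : Option (StrandsGen n k) → StrandsGen n k → Option (StrandsGen n k)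
  | none, _ => none
  | some a, b => a.mul b

/-- Multiplication extended to `0` on the right. -/
def StrandsGen.mulR {n k : ℕ} : StrandsGen n k → Option (StrandsGen n k) → Option (StrandsGen n k)
  | _, none => none
  | a, some b => a.mul b

def strandInversions {n : ℕ} {S T : Finset (Fin n)} (φ : {x // x ∈ S} ≃ {x // x ∈ T}) :
    Finset ({x // x ∈ S} × {x // x ∈ S}) :=
  Finset.univ.filter fun p => (p.1 : Fin n) < (p.2 : Fin n) ∧ (φ p.2 : Fin n) < (φ p.1 : Fin n)

theorem mem_strandInversions {n : ℕ} {S T : Finset (Fin n)} {φ : {x // x ∈ S} ≃ {x // x ∈ T}}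
    {p : {x // x ∈ S} × {x // x ∈ S}} :
    p ∈ strandInversions φ ↔ (p.1 : Fin n) < (p.2 : Fin n) ∧ (φ p.2 : Fin n) < (φ p.1 : Fin n) := by
  simp [strandInversions]

theorem strandInversions_trans_subset {n : ℕ} {S T V : Finset (Fin n)}
    (φ : {x // x ∈ S} ≃ {x // x ∈ T}) (ψ : {x // x ∈ T} ≃ {x // x ∈ V}) :
    strandInversions (φ.trans ψ) ⊆
      strandInversions φ ∪ (strandInversions ψ).map (φ.prodCongr φ).symm.toEmbedding := by
  rintro ⟨x, y⟩ hxy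
  rw [Finset.mem_union, Finset.mem_map_equiv, Equiv.symm_symm, mem_strandInversions,
    mem_strandInversions]
  rw [mem_strandInversions] at hxy
  rcases lt_or_gt_of_ne (φ.injective.ne (ne_of_apply_ne Subtype.val hxy.1.ne)) with h | h
  · exact Or.inr ⟨h, hxy.2⟩
  · exact Or.inl ⟨hxy.1, h⟩

theorem strandInv_trans_le {n : ℕ} {S T V : Finset (Fin n)} (φ : {x // x ∈ S} ≃ {x // x ∈ T})
    (ψ : {x // x ∈ T} ≃ {x // x ∈ V}) :
    strandInv (φ.trans ψ) ≤ strandInv φ + strandInv ψ := by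
  change (strandInversions _).card ≤ (strandInversions _).card + (strandInversions _).card
  rw [← Finset.card_map (φ.prodCongr φ).symm.toEmbedding (s := strandInversions ψ)]
  exact (Finset.card_le_card (strandInversions_trans_subset φ ψ)).trans (Finset.card_union_le _ _)

theorem strandInv_comp_le {n k : ℕ} (a b : StrandsGen n k) (h : a.T = b.S) :
    strandInv (a.comp b h).str ≤ strandInv a.str + strandInv b.str := by
  obtain ⟨S, T, -, -, φ, -⟩ := a
  obtain ⟨U, V, -, -, ψ, -⟩ := b
  dsimp only at h
  subst h
  -- `castMem rfl` is the identity definitionally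
  exact strandInv_trans_le φ ψ

namespace StrandsGen

variable {n k : ℕ}

theorem comp_assoc (a b c : StrandsGen n k) (hab : a.T = b.S) (hbc : b.T = c.S) :
    (a.comp b hab).comp c hbc = a.comp (b.comp c hbc) hab := rfl

def mul₃ (a b c : StrandsGen n k) : Option (StrandsGen n k) :=
  if h : a.T = b.S ∧ b.T = c.S then
    if strandInv ((a.comp b h.1).comp c h.2).str =
        strandInv a.str + strandInv b.str + strandInv c.str then
      some ((a.comp b h.1).comp c h.2)
    else none
  else none

theorem mul_of_T_eq {a b : StrandsGen n k} (h : a.T = b.S) :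
    a.mul b = if strandInv (a.comp b h).str = strandInv a.str + strandInv b.str then
      some (a.comp b h) else none :=
  dif_pos h

theorem mul_of_T_ne {a b : StrandsGen n k} (h : a.T ≠ b.S) : a.mul b = none :=
  dif_neg h

theorem mulL_mul_eq_mul₃ (a b c : StrandsGen n k) : mulL (a.mul b) c = mul₃ a b c := by
  unfold mul₃
  by_cases hab : a.T = b.S
  · rw [mul_of_T_eq hab]
    by_cases hbc : b.T = c.S
    · rw [dif_pos ⟨hab, hbc⟩]
      have hab_le := strandInv_comp_le a b hab
      have habc_le := strandInv_comp_le (a.comp b hab) c hbc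
      by_cases hI : strandInv (a.comp b hab).str = strandInv a.str + strandInv b.str
      · rw [if_pos hI]
        exact (mul_of_T_eq (a := a.comp b hab) hbc).trans (by rw [hI])
      · rw [if_neg hI, if_neg (by omega)]
        rfl
    · rw [dif_neg (fun h => hbc h.2)]
      split_ifs
      exacts [mul_of_T_ne hbc, rfl]
  · rw [mul_of_T_ne hab, dif_neg (fun h => hab h.1)]
    rfl

theorem mulR_mul_eq_mul₃ (a b c : StrandsGen n k) : mulR a (b.mul c) = mul₃ a b c := by
  unfold mul₃
  by_cases hbc : b.T = c.S
  · rw [mul_of_T_eq hbc]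
    by_cases hab : a.T = b.S
    · rw [dif_pos ⟨hab, hbc⟩, comp_assoc]
      have hbc_le := strandInv_comp_le b c hbc
      have habc_le := strandInv_comp_le a (b.comp c hbc) hab
      by_cases hI : strandInv (b.comp c hbc).str = strandInv b.str + strandInv c.str
      · rw [if_pos hI]
        exact (mul_of_T_eq (b := b.comp c hbc) hab).trans (by rw [hI, add_assoc])
      · rw [if_neg hI, if_neg (by omega)]
        rfl
    · rw [dif_neg (fun h => hab h.1)]
      split_ifs
      exacts [mul_of_T_ne hab, rfl]
  · rw [mul_of_T_ne hbc, dif_neg (fun h => hbc h.2)]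
    rfl

end StrandsGen

/-- The multiplication of the strands algebra `A(n,k)` is associative:
`(a·b)·c = a·(b·c)` for generators `a = (S,T,φ)`, `b = (T,V,ψ)`, `c = (V,W,χ)`. -/
theorem strands_mul_assoc {n k : ℕ} (a b c : StrandsGen n k) :
    StrandsGen.mulL (a.mul b) c = StrandsGen.mulR a (b.mul c) :=
  (StrandsGen.mulL_mul_eq_mul₃ a b c).trans (StrandsGen.mulR_mul_eq_mul₃ a b c).symm
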